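/- arXiv:1511.04378 — 4 statements merged into one kernel-verified Lean document; each statement's English description precedes it below -/
import Mathlib

section
/- There exists a constant C > 0 such that for all x, y ∈ ℝ³ one has s(x−y)⁻¹ ≤ C (1 + |y|) s(x)⁻¹, i.e. s(x) ≤ C (1 + |y|) s(x−y). -/
open MeasureTheory Real
noncomputable section

abbrev E3 := EuclideanSpace ℝ (Fin 3)

/-- `s(x) := 1 + |x| - x₁`. -/
def sfun (x : E3) : ℝ := 1 + ‖x‖ - x 0

/-- first standard basis vector -/
def e1 : E3 := EuclideanSpace.single 0 1

/-- the matrix Ω -/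
def Om (ϱ : ℝ) : Matrix (Fin 3) (Fin 3) ℝ := !![0,0,0; 0,0,-ϱ; 0,ϱ,0]

/-- matrix-vector product as a map on `E3` -/
def mvec (M : Matrix (Fin 3) (Fin 3) ℝ) (y : E3) : E3 :=
  WithLp.toLp 2 (M.mulVec (fun i => y i) : Fin 3 → ℝ)

/-- partial derivative in direction `i` -/
def pd (i : Fin 3) (f : E3 → ℝ) : E3 → ℝ :=
  fun x => fderiv ℝ f x (EuclideanSpace.single i 1)

/-- iterated partial derivative corresponding to a multi-index `α` -/
def mpd (α : Fin 3 → ℕ) (f : E3 → ℝ) : E3 → ℝ :=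
  (pd 0)^[α 0] ((pd 1)^[α 1] ((pd 2)^[α 2] f))

/-- heat kernel -/
def Kheat (x : E3) (t : ℝ) : ℝ := (4*π*t)^(-(3:ℝ)/2) * Real.exp (-‖x‖^2/(4*t))

/-- Newtonian potential -/
def Npot (x : E3) : ℝ := (4*π*‖x‖)⁻¹

/-- velocity part of fundamental solution of the time-dependent Stokes system -/
def Tfun (j k : Fin 3) (x : E3) (t : ℝ) : ℝ :=
  (if j = k then Kheat x t else 0)
    + pd j (pd k (fun z => ∫ y : E3, Npot (z - y) * Kheat y t)) x

/-- the function Γ -/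
def Gam (τ ϱ : ℝ) (j k : Fin 3) (x y : E3) (t : ℝ) : ℝ :=
  ∑ m : Fin 3, Tfun j m (x - (τ*t) • e1 - mvec (NormedSpace.exp ((-t) • Om ϱ)) y) t
      * (NormedSpace.exp ((-t) • Om ϱ)) m k

/-- the function Z -/
def Zfun (τ ϱ : ℝ) (j k : Fin 3) (x y : E3) : ℝ :=
  ∫ t in Set.Ioi (0:ℝ), Gam τ ϱ j k x y t

/-- ψ -/
def psi (r : ℝ) : ℝ := ∫ t in (0:ℝ)..r, (1 - Real.exp (-t)) / t

/-- Φ -/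
def Phi (τ : ℝ) (x : E3) : ℝ := (4*π*τ)⁻¹ * psi (τ * (‖x‖ - x 0) / 2)

/-- velocity part of the fundamental solution of the Oseen system -/
def Efun (τ : ℝ) (j k : Fin 3) (x : E3) : ℝ :=
  (if j = k then ∑ i : Fin 3, pd i (pd i (Phi τ)) x else 0) - pd j (pd k (Phi τ)) x

/-- fundamental solution of the scalar Oseen equation -/
def Ofun (τ : ℝ) (x : E3) : ℝ := (4*π*‖x‖)⁻¹ * Real.exp (-τ * (‖x‖ - x 0) / 2)

/-- fundamental solution of the scalar Oseen resolvent equation -/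
def Olam (τ lam : ℝ) (x : E3) : ℝ :=
  (4*π*‖x‖)⁻¹ * Real.exp (-Real.sqrt (lam + τ^2/4) * ‖x‖ + τ * x 0 / 2)

/-- Fourier transform with the convention of the paper -/
def ft (φ : E3 → ℂ) (ξ : E3) : ℂ :=
  ((2*π : ℝ)^(-(3:ℝ)/2) : ℝ) * ∫ x : E3, Complex.exp (-Complex.I * (inner ℝ ξ x : ℝ)) * φ x

lemma one_le_sfun (x : E3) : 1 ≤ sfun x := by
  have : x 0 ≤ ‖x‖ := (le_abs_self _).trans (PiLp.norm_apply_le x 0)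
  unfold sfun
  linarith

lemma sfun_le_sfun_sub_add (x y : E3) : sfun x ≤ sfun (x - y) + 2 * ‖y‖ := by
  have htri : ‖x‖ ≤ ‖x - y‖ + ‖y‖ := norm_le_norm_sub_add x y
  have hy : -y 0 ≤ ‖y‖ := (neg_le_abs _).trans (PiLp.norm_apply_le y 0)
  simp only [sfun, PiLp.sub_apply]
  linarith

lemma sfun_le_mul_sfun_sub (x y : E3) : sfun x ≤ 2 * (1 + ‖y‖) * sfun (x - y) := by
  have hs := one_le_sfun (x - y)
  calc sfun x ≤ sfun (x - y) + 2 * ‖y‖ := sfun_le_sfun_sub_add x y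
    _ ≤ sfun (x - y) + 2 * ‖y‖ * sfun (x - y) := by
      nlinarith [norm_nonneg y]
    _ ≤ 2 * (1 + ‖y‖) * sfun (x - y) := by nlinarith

theorem stmt0 :
    ∃ C > (0:ℝ), ∀ x y : E3,
      (sfun (x - y))⁻¹ ≤ C * (1 + ‖y‖) * (sfun x)⁻¹ ∧
      sfun x ≤ C * (1 + ‖y‖) * sfun (x - y) := by
  refine ⟨2, two_pos, fun x y => ⟨?_, sfun_le_mul_sfun_sub x y⟩⟩
  have hx : 0 < sfun x := one_pos.trans_le (one_le_sfun x)
  have hxy : 0 < sfun (x - y) := one_pos.trans_le (one_le_sfun (x - y))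
  rw [← div_eq_mul_inv, le_div_iff₀ hx, inv_mul_le_iff₀ hxy, mul_comm]
  exact sfun_le_mul_sfun_sub x y

end
end

section
/- Let τ ∈ (0,∞). There exists a constant C > 0 (depending only on τ) such that for all x ∈ ℝ³ and t ∈ (0,∞): if |x| ≤ 1 then |x − τ t e₁|² + t ≥ C (|x|² + t), and if |x| > 1 then |x − τ t e₁|² + t ≥ C (|x| s(x) + t). -/
open MeasureTheory Real
noncomputable section

/-- With `u = τ t` the right-hand side is `(r - u)² + 2u(r - a) + t`. If `u ≤ r/2` the square is at
least `r²/4 ≥ C q`; otherwise `r < 2τt`, so `q ≤ r + r(r - a)` is absorbed by `t` and `2u(r - a)`. -/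
lemma le_sq_sub_two_mul_add_sq_add {τ t r a q C : ℝ} (hτ : 0 < τ) (ht : 0 < t) (har : |a| ≤ r)
    (hC : 0 ≤ C) (hC_le : C ≤ 1 / 16) (hCτ : C * (2 * τ + 1) ≤ 1)
    (hq_sq : q ≤ 4 * r ^ 2) (hq_lin : q ≤ r * (1 + r - a)) :
    C * (q + t) ≤ r ^ 2 - 2 * (τ * t) * a + (τ * t) ^ 2 + t := by
  have hu : 0 < τ * t := mul_pos hτ ht
  have hra : 0 ≤ r - a := by linarith [le_abs_self a]
  have hdrift : 0 ≤ 2 * (τ * t) * (r - a) := by positivity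
  have hexpand : r ^ 2 - 2 * (τ * t) * a + (τ * t) ^ 2
      = (r - τ * t) ^ 2 + 2 * (τ * t) * (r - a) := by ring
  rw [hexpand]
  rcases le_or_gt (τ * t) (r / 2) with hsmall | hlarge
  · have hsq : r ^ 2 / 4 ≤ (r - τ * t) ^ 2 := by nlinarith
    nlinarith
  · have hq : q ≤ 2 * (τ * t) + 2 * (τ * t) * (r - a) := by nlinarith
    nlinarith

lemma le_norm_sub_smul_sq_add {F : Type*} [NormedAddCommGroup F] [InnerProductSpace ℝ F]
    {e : F} (he : ‖e‖ = 1) (x : F) {τ t q C : ℝ} (hτ : 0 < τ) (ht : 0 < t)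
    (hC : 0 ≤ C) (hC_le : C ≤ 1 / 16) (hCτ : C * (2 * τ + 1) ≤ 1)
    (hq_sq : q ≤ 4 * ‖x‖ ^ 2) (hq_lin : q ≤ ‖x‖ * (1 + ‖x‖ - inner ℝ x e)) :
    C * (q + t) ≤ ‖x - (τ * t) • e‖ ^ 2 + t := by
  have hnorm : ‖x - (τ * t) • e‖ ^ 2 = ‖x‖ ^ 2 - 2 * (τ * t) * inner ℝ x e + (τ * t) ^ 2 := by
    rw [norm_sub_sq_real, real_inner_smul_right, norm_smul, he, Real.norm_eq_abs, mul_one, sq_abs]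
    ring
  have hinner : |inner ℝ x e| ≤ ‖x‖ := by simpa [he] using abs_real_inner_le_norm x e
  rw [hnorm]
  exact le_sq_sub_two_mul_add_sq_add hτ ht hinner hC hC_le hCτ hq_sq hq_lin

lemma norm_e1 : ‖e1‖ = 1 := by simp [e1]

lemma inner_e1 (x : E3) : inner ℝ x e1 = x 0 := by simp [e1, EuclideanSpace.inner_single_right]

theorem stmt1 (τ : ℝ) (hτ : 0 < τ) :
    ∃ C > (0:ℝ), ∀ (x : E3) (t : ℝ), 0 < t →
      (‖x‖ ≤ 1 → C * (‖x‖^2 + t) ≤ ‖x - (τ*t) • e1‖^2 + t) ∧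
      (1 < ‖x‖ → C * (‖x‖ * sfun x + t) ≤ ‖x - (τ*t) • e1‖^2 + t) := by
  set C := (16 * (τ + 1))⁻¹
  have hC : 0 < C := by positivity
  have hC_le : C ≤ 1 / 16 := by
    rw [one_div]; exact inv_anti₀ (by norm_num) (by linarith)
  have hCτ : C * (2 * τ + 1) ≤ 1 := by
    rw [inv_mul_le_one₀ (by positivity)]; linarith
  refine ⟨C, hC, fun x t ht => ?_⟩
  have hx0 : |x 0| ≤ ‖x‖ := by simpa using PiLp.norm_apply_le x 0
  have hbound := fun q ↦ le_norm_sub_smul_sq_add (q := q) norm_e1 x hτ ht hC.le hC_le hCτ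
  simp only [inner_e1] at hbound
  constructor
  · intro hx
    apply hbound <;> nlinarith [le_abs_self (x 0), norm_nonneg x]
  · intro hx
    refine hbound _ ?_ le_rfl
    rw [sfun]
    nlinarith [neg_abs_le (x 0)]

end
end

section
/- Let R ∈ (0,∞) and k ∈ {0,1}. There exists a constant C > 0 (depending only on τ, ϱ, R) such that for all x, y ∈ ℝ³ with |x| < R, |y| < R and x ≠ y, one has ∫₀^∞ ( |x − τ t e₁ − e^{−tΩ}·y|² + t )^{−3/2 − k/2} dt ≤ C |x − y|^{−1−k}. -/
open MeasureTheory Real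
noncomputable section

/-!
Write `p = (3 + k)/2`. Since `‖e^{-tΩ} - 1‖ = O(t)`, for `0 < t ≤ 1` the point
`x - τ t e₁ - e^{-tΩ} y` lies within `O(t)` of `x - y`, uniformly in `‖y‖ < R`. So up to a time
`T ≍ ‖x - y‖` it has norm at least `‖x - y‖ / 2`, and the integral over `(0, T]` is at most
`∫₀^∞ (‖x - y‖²/4 + t)^{-p} dt ≍ ‖x - y‖^{2 - 2p}`. Beyond `T` the integrand is at most `t^{-p}`,
whose tail integral `≍ T^{1-p}` is `≲ ‖x - y‖^{2 - 2p}` because `‖x - y‖ < 2R`.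
-/

open Set
-- The L² operator norm on matrices; its topology is the entrywise one, so `NormedSpace.exp` is
-- the same map as in the definitions above.
open scoped Matrix.Norms.L2Operator

lemma exists_norm_exp_smul_sub_one_le {𝔸 : Type*} [NormedRing 𝔸] [NormedAlgebra ℝ 𝔸]
    [CompleteSpace 𝔸] (A : 𝔸) :
    ∃ L ≥ 0, ∀ t ∈ Icc (0:ℝ) 1, ‖NormedSpace.exp (t • A) - 1‖ ≤ L * t := by
  have hderiv (u : ℝ) : HasDerivAt (fun u : ℝ => NormedSpace.exp (u • A))
      (NormedSpace.exp (u • A) * A) u := hasDerivAt_exp_smul_const A u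
  obtain ⟨M, hM⟩ := isCompact_Icc.exists_bound_of_continuousOn
    fun u (_ : u ∈ Icc (0:ℝ) 1) => (hderiv u).continuousAt.continuousWithinAt
  have hM0 : 0 ≤ M := (norm_nonneg _).trans (hM 0 (left_mem_Icc.2 zero_le_one))
  refine ⟨M * ‖A‖, by positivity, fun t ht => ?_⟩
  have := norm_image_sub_le_of_norm_deriv_le_segment' (fun u _ => (hderiv u).hasDerivWithinAt)
    (fun u hu => (norm_mul_le _ _).trans <|
      mul_le_mul_of_nonneg_right (hM u (Ico_subset_Icc_self hu)) (norm_nonneg A)) t ht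
  simpa using this

lemma norm_mvec_le (M : Matrix (Fin 3) (Fin 3) ℝ) (y : E3) : ‖mvec M y‖ ≤ ‖M‖ * ‖y‖ :=
  M.l2_opNorm_mulVec y

lemma mvec_sub_one (M : Matrix (Fin 3) (Fin 3) ℝ) (y : E3) : mvec (M - 1) y = mvec M y - y := by
  ext i
  simp [mvec, Matrix.sub_mulVec]

lemma exists_norm_mvec_exp_smul_sub_le (A : Matrix (Fin 3) (Fin 3) ℝ) :
    ∃ L ≥ 0, ∀ t ∈ Icc (0:ℝ) 1, ∀ y : E3,
      ‖mvec (NormedSpace.exp ((-t) • A)) y - y‖ ≤ L * t * ‖y‖ := by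
  obtain ⟨L, hL0, hL⟩ := exists_norm_exp_smul_sub_one_le (-A)
  refine ⟨L, hL0, fun t ht y => ?_⟩
  rw [← mvec_sub_one, neg_smul, ← smul_neg]
  exact (norm_mvec_le _ y).trans (by gcongr; exact hL t ht)

lemma exists_norm_displacement_sub_le (τ ϱ : ℝ) {R : ℝ} (hR : 0 ≤ R) :
    ∃ K ≥ 0, ∀ t ∈ Icc (0:ℝ) 1, ∀ x y : E3, ‖y‖ ≤ R →
      ‖(x - (τ*t) • e1 - mvec (NormedSpace.exp ((-t) • Om ϱ)) y) - (x - y)‖ ≤ K * t := by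
  obtain ⟨L, hL0, hL⟩ := exists_norm_mvec_exp_smul_sub_le (Om ϱ)
  refine ⟨|τ| + L * R, by positivity, fun t ht x y hy => ?_⟩
  have he1 : ‖(τ*t) • e1‖ = |τ| * t := by
    simp [e1, norm_smul, abs_of_nonneg ht.1]
  calc ‖(x - (τ*t) • e1 - mvec (NormedSpace.exp ((-t) • Om ϱ)) y) - (x - y)‖
      = ‖-((τ*t) • e1 + (mvec (NormedSpace.exp ((-t) • Om ϱ)) y - y))‖ := by congr 1; abel
    _ ≤ ‖(τ*t) • e1‖ + ‖mvec (NormedSpace.exp ((-t) • Om ϱ)) y - y‖ := by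
      rw [norm_neg]; exact norm_add_le _ _
    _ ≤ |τ| * t + L * t * R := by
      rw [he1]
      gcongr
      exact (hL t ht y).trans (mul_le_mul_of_nonneg_left hy (mul_nonneg hL0 ht.1))
    _ = (|τ| + L * R) * t := by ring

section Integrals

variable {p : ℝ}

lemma integrableOn_Ioi_rpow_add (hp : 1 < p) {a : ℝ} (ha : 0 < a) :
    IntegrableOn (fun t : ℝ => (a + t) ^ (-p)) (Ioi 0) := by
  have := ((measurePreserving_add_left volume a).integrableOn_comp_preimage
    (measurableEmbedding_addLeft a)).2 (integrableOn_Ioi_rpow_of_lt (by linarith : -p < -1) ha)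
  rwa [preimage_const_add_Ioi, sub_self] at this

lemma integral_Ioi_rpow_add (hp : 1 < p) {a : ℝ} (ha : 0 < a) :
    ∫ t in Ioi 0, (a + t) ^ (-p) = a ^ (1 - p) / (p - 1) := by
  have := (measurePreserving_add_left volume a).setIntegral_preimage_emb
    (measurableEmbedding_addLeft a) (fun s => s ^ (-p)) (Ioi a)
  rw [preimage_const_add_Ioi, sub_self] at this
  rw [this, integral_Ioi_rpow_of_lt (by linarith) ha, neg_add_eq_sub, neg_div, ← div_neg, neg_sub]

lemma integral_Ioi_rpow_add_le {ρ : ℝ → ℝ} {a T : ℝ} (hp : 1 < p) (ha : 0 < a) (hT : 0 < T)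
    (hρ0 : ∀ t, 0 ≤ ρ t) (hρ : ∀ t ∈ Ioc 0 T, a ≤ ρ t) :
    ∫ t in Ioi 0, (ρ t + t) ^ (-p) ≤ (a ^ (1 - p) + T ^ (1 - p)) / (p - 1) := by
  have hshift := integrableOn_Ioi_rpow_add hp ha
  have htail : Integrable ((Ioi T).indicator fun t : ℝ => t ^ (-p)) :=
    (integrableOn_Ioi_rpow_of_lt (by linarith) hT).integrable_indicator measurableSet_Ioi
  calc ∫ t in Ioi 0, (ρ t + t) ^ (-p)
      ≤ ∫ t in Ioi 0, ((a + t) ^ (-p) + (Ioi T).indicator (fun t => t ^ (-p)) t) := by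
        refine integral_mono_of_nonneg ?_ (hshift.add htail.integrableOn) ?_ <;>
          filter_upwards [ae_restrict_mem measurableSet_Ioi] with t (ht : 0 < t)
        · exact Real.rpow_nonneg (by linarith [hρ0 t]) _
        have hind : 0 ≤ (Ioi T).indicator (fun t : ℝ => t ^ (-p)) t :=
          indicator_nonneg (fun s hs => Real.rpow_nonneg (hT.trans hs).le _) t
        rcases le_or_gt t T with htT | hTt
        · have := Real.rpow_le_rpow_of_nonpos (add_pos ha ht)
            (by linarith [hρ t ⟨ht, htT⟩] : a + t ≤ ρ t + t) (by linarith : -p ≤ 0)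
          linarith
        · rw [indicator_of_mem (show t ∈ Ioi T from hTt)]
          have := Real.rpow_le_rpow_of_nonpos ht (by linarith [hρ0 t] : t ≤ ρ t + t)
            (by linarith : -p ≤ 0)
          linarith [Real.rpow_nonneg (add_pos ha ht).le (-p)]
    _ = (a ^ (1 - p) + T ^ (1 - p)) / (p - 1) := by
        rw [integral_add hshift htail.integrableOn, integral_Ioi_rpow_add hp ha,
          integral_indicator measurableSet_Ioi, Measure.restrict_restrict measurableSet_Ioi,
          Ioi_inter_Ioi, sup_eq_left.2 hT.le, integral_Ioi_rpow_of_lt (by linarith) hT,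
          neg_add_eq_sub, neg_div, ← div_neg, neg_sub, add_div]

lemma rpow_half_sq_add_rpow_mul_le {d D ε : ℝ} (hp : 1 < p) (hd : 0 < d) (hdD : d ≤ D)
    (hε : 0 < ε) :
    ((d / 2) ^ 2) ^ (1 - p) + (ε * d) ^ (1 - p)
      ≤ (4 ^ (p - 1) + (D / ε) ^ (p - 1)) * d ^ (2 * (1 - p)) := by
  have hnear : ((d / 2) ^ 2) ^ (1 - p) = 4 ^ (p - 1) * d ^ (2 * (1 - p)) := by
    rw [show (d / 2) ^ 2 = 4⁻¹ * d ^ 2 by ring, Real.mul_rpow (by norm_num) (by positivity),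
      Real.inv_rpow (by norm_num), ← Real.rpow_neg (by norm_num), neg_sub,
      ← Real.rpow_natCast, ← Real.rpow_mul hd.le, Nat.cast_ofNat]
  have hfar : (ε * d) ^ (1 - p) ≤ (D / ε) ^ (p - 1) * d ^ (2 * (1 - p)) :=
    calc (ε * d) ^ (1 - p) = ε ^ (1 - p) * (d ^ (p - 1) * d ^ (2 * (1 - p))) := by
          rw [Real.mul_rpow hε.le hd.le, ← Real.rpow_add hd]; ring_nf
      _ ≤ ε ^ (1 - p) * (D ^ (p - 1) * d ^ (2 * (1 - p))) := by gcongr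
      _ = (D / ε) ^ (p - 1) * d ^ (2 * (1 - p)) := by
          rw [Real.div_rpow (hd.le.trans hdD) hε.le, show 1 - p = -(p - 1) by ring,
            Real.rpow_neg hε.le]
          ring
  rw [add_mul]
  linarith

theorem exists_integral_Ioi_rpow_norm_sq_add_le {E : Type*} [NormedAddCommGroup E] {K D : ℝ}
    (hp : 1 < p) (hK : 0 ≤ K) (hD : 0 < D) :
    ∃ C > 0, ∀ (w : ℝ → E) (v : E), v ≠ 0 → ‖v‖ ≤ D → (∀ t ∈ Ioc 0 1, ‖w t - v‖ ≤ K * t) →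
      ∫ t in Ioi 0, (‖w t‖ ^ 2 + t) ^ (-p) ≤ C * ‖v‖ ^ (2 * (1 - p)) := by
  set ε := (2 * (D + K))⁻¹ with hε_def
  have hε : 0 < ε := by positivity
  have hp1 : 0 < p - 1 := by linarith
  refine ⟨(4 ^ (p - 1) + (D / ε) ^ (p - 1)) / (p - 1), by positivity,
    fun w v hv hvD hw => ?_⟩
  have hd : 0 < ‖v‖ := norm_pos_iff.2 hv
  have hεD : ε * D ≤ 1 := by
    rw [hε_def, inv_mul_le_iff₀ (by positivity)]; linarith
  have hεK : K * ε ≤ 1 / 2 := by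
    rw [hε_def, mul_inv_le_iff₀ (by positivity)]; linarith
  have hfar : ∀ t ∈ Ioc 0 (ε * ‖v‖), (‖v‖ / 2) ^ 2 ≤ ‖w t‖ ^ 2 := by
    intro t ht
    have ht1 : t ≤ 1 := ht.2.trans ((mul_le_mul_of_nonneg_left hvD hε.le).trans hεD)
    have hKt : K * t ≤ ‖v‖ / 2 :=
      calc K * t ≤ K * ε * ‖v‖ := by rw [mul_assoc]; exact mul_le_mul_of_nonneg_left ht.2 hK
        _ ≤ ‖v‖ / 2 := by nlinarith
    have := norm_sub_norm_le v (w t)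
    rw [norm_sub_rev] at this
    gcongr
    linarith [hw t ⟨ht.1, ht1⟩]
  calc ∫ t in Ioi 0, (‖w t‖ ^ 2 + t) ^ (-p)
      ≤ (((‖v‖ / 2) ^ 2) ^ (1 - p) + (ε * ‖v‖) ^ (1 - p)) / (p - 1) :=
        integral_Ioi_rpow_add_le hp (by positivity) (by positivity) (fun t => by positivity) hfar
    _ ≤ (4 ^ (p - 1) + (D / ε) ^ (p - 1)) / (p - 1) * ‖v‖ ^ (2 * (1 - p)) := by
        rw [div_mul_eq_mul_div]
        gcongr
        exact rpow_half_sq_add_rpow_mul_le hp hd hvD hε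

end Integrals

theorem stmt3_general (τ ϱ R : ℝ) (hR : 0 < R)
    (k : ℕ) :
    ∃ C > (0:ℝ), ∀ (x y : E3), ‖x‖ < R → ‖y‖ < R → x ≠ y →
      (∫ t in Set.Ioi (0:ℝ),
          (‖x - (τ*t) • e1 - mvec (NormedSpace.exp ((-t) • Om ϱ)) y‖^2 + t)
            ^ (-(3:ℝ)/2 - (k:ℝ)/2))
        ≤ C * ‖x - y‖ ^ (-(1:ℝ) - (k:ℝ)) := by
  obtain ⟨K, hK, hdisp⟩ := exists_norm_displacement_sub_le τ ϱ hR.le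
  obtain ⟨C, hC, hint⟩ := exists_integral_Ioi_rpow_norm_sq_add_le (E := E3) (p := (3 + k) / 2)
    (by linarith [(k.cast_nonneg : (0:ℝ) ≤ k)]) hK (by positivity : 0 < 2 * R)
  refine ⟨C, hC, fun x y hx hy hxy => ?_⟩
  rw [show -(3:ℝ) / 2 - k / 2 = -((3 + k) / 2) by ring,
    show -(1:ℝ) - k = 2 * (1 - (3 + k) / 2) by ring]
  exact hint _ (x - y) (sub_ne_zero.2 hxy) (by linarith [norm_sub_le x y])
    fun t ht => hdisp t (Ioc_subset_Icc_self ht) x y hy.le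

theorem stmt3 (τ ϱ R : ℝ) (hτ : 0 < τ) (hϱ : ϱ ≠ 0) (hR : 0 < R)
    (k : ℕ) (hk : k = 0 ∨ k = 1) :
    ∃ C > (0:ℝ), ∀ (x y : E3), ‖x‖ < R → ‖y‖ < R → x ≠ y →
      (∫ t in Set.Ioi (0:ℝ),
          (‖x - (τ*t) • e1 - mvec (NormedSpace.exp ((-t) • Om ϱ)) y‖^2 + t)
            ^ (-(3:ℝ)/2 - (k:ℝ)/2))
        ≤ C * ‖x - y‖ ^ (-(1:ℝ) - (k:ℝ)) :=
  stmt3_general τ ϱ R hR k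

end
end

section
/- For every x ∈ ℝ³∖{0}, the partial derivative ∂_{x_1}Φ(x) exists and ∂_{x_1}Φ(x) = τ^{−1} ( 𝔒(x) − N(x) ), i.e. ∂_{x_1}Φ(x) = (4πτ|x|)^{−1} ( e^{−τ(|x| − x₁)/2} − 1 ). -/
open MeasureTheory Real
noncomputable section

/-! Along `e1` the function `Φ` is `ψ` composed with the paraboloidal coordinate `|x| - x₁`,
whose derivative in direction `e1` is `x₁/|x| - 1 = -(|x| - x₁)/|x|`. Since `ψ'(r) r = 1 - e^{-r}`
for every `r`, the chain rule gives `∂₁Φ(x) = -(1 - e^{-r}) / (4πτ|x|)` with `r = τ(|x| - x₁)/2`. -/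

theorem psi_eq_integral_dslope (r : ℝ) :
    psi r = ∫ t in (0:ℝ)..r, dslope (fun t => 1 - exp (-t)) 0 t := by
  refine intervalIntegral.integral_congr_ae ?_
  filter_upwards [Measure.ae_ne volume (0 : ℝ)] with t ht _
  simp [dslope_of_ne _ ht, slope_def_field]

-- `dslope` fills the removable singularity of the integrand at `0`, so FTC applies at `r = 0` too.
theorem hasDerivAt_psi (r : ℝ) : HasDerivAt psi (dslope (fun t => 1 - exp (-t)) 0 r) r := by
  have hcont : Continuous (dslope (fun t => 1 - exp (-t)) 0) :=
    continuousOn_univ.1 ((continuousOn_dslope Filter.univ_mem).2 ⟨by fun_prop, by fun_prop⟩)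
  rw [funext psi_eq_integral_dslope]
  exact intervalIntegral.integral_hasDerivAt_right (hcont.intervalIntegrable _ _)
    hcont.aestronglyMeasurable.stronglyMeasurableAtFilter hcont.continuousAt

theorem hasFDerivAt_norm {F : Type*} [NormedAddCommGroup F] [InnerProductSpace ℝ F] {x : F}
    (hx : x ≠ 0) : HasFDerivAt (‖·‖) (‖x‖⁻¹ • innerSL ℝ x) x := by
  have h := (hasStrictFDerivAt_norm_sq x).hasFDerivAt.sqrt (by simpa using hx)
  simp only [sqrt_sq (norm_nonneg _)] at h
  convert h using 1
  ext v
  simp only [smul_apply, coe_innerSL_apply, smul_eq_mul, one_div, mul_inv_rev, nsmul_eq_mul,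
    Nat.cast_ofNat]
  field_simp

theorem hasFDerivAt_norm_sub_coord {ι : Type*} [Fintype ι] {x : EuclideanSpace ℝ ι}
    (hx : x ≠ 0) (i : ι) :
    HasFDerivAt (fun y : EuclideanSpace ℝ ι => ‖y‖ - y i)
      (‖x‖⁻¹ • innerSL ℝ x - EuclideanSpace.proj i) x :=
  (hasFDerivAt_norm hx).sub (EuclideanSpace.proj (𝕜 := ℝ) i).hasFDerivAt

theorem hasLineDerivAt_Phi (τ : ℝ) {x : E3} (hx : x ≠ 0) :
    HasLineDerivAt ℝ (Phi τ) ((4*π*τ*‖x‖)⁻¹ * (exp (-τ * (‖x‖ - x 0) / 2) - 1)) x e1 := by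
  set r := τ * (‖x‖ - x 0) / 2 with hr
  have hlin : HasDerivAt (fun s => τ * s / 2) (τ / 2) (‖x‖ - x 0) := by
    simpa using ((hasDerivAt_id (‖x‖ - x 0)).const_mul τ).div_const 2
  have hscaled : HasDerivAt (fun s => (4*π*τ)⁻¹ * psi (τ * s / 2))
      ((4*π*τ)⁻¹ * (dslope (fun t => 1 - exp (-t)) 0 r * (τ / 2))) (‖x‖ - x 0) :=
    ((hasDerivAt_psi r).comp (‖x‖ - x 0) hlin).const_mul _
  have h := (hscaled.comp_hasFDerivAt x (hasFDerivAt_norm_sub_coord hx 0)).hasLineDerivAt e1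
  change HasLineDerivAt ℝ (Phi τ) _ x e1 at h
  have hdslope : r * dslope (fun t => 1 - exp (-t)) 0 r = 1 - exp (-r) := by
    simpa using sub_smul_dslope (fun t => 1 - exp (-t)) 0 r
  have hcoord : τ / 2 * (‖x‖⁻¹ * x 0 - 1) = -(r / ‖x‖) := by
    have hx' : ‖x‖ ≠ 0 := norm_ne_zero_iff.2 hx
    rw [hr]
    field_simp
    ring
  convert h using 1
  simp only [e1, smul_apply, sub_apply, coe_innerSL_apply, EuclideanSpace.inner_single_right,
    PiLp.proj_apply, PiLp.single_eq_same, smul_eq_mul, conj_trivial, one_mul]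
  rw [show -τ * (‖x‖ - x 0) / 2 = -r by rw [hr]; ring]
  linear_combination (τ⁻¹ * (π⁻¹ * 4⁻¹) * ‖x‖⁻¹) * hdslope
    - (τ⁻¹ * (π⁻¹ * 4⁻¹) * dslope (fun t => 1 - exp (-t)) 0 r) * hcoord

theorem stmt16_general (τ : ℝ) (x : E3) (hx : x ≠ 0) :
    HasLineDerivAt ℝ (Phi τ) (τ⁻¹ * (Ofun τ x - Npot x)) x e1 ∧
    τ⁻¹ * (Ofun τ x - Npot x)
      = (4*π*τ*‖x‖)⁻¹ * (Real.exp (-τ * (‖x‖ - x 0) / 2) - 1) := by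
  have hformula : τ⁻¹ * (Ofun τ x - Npot x)
      = (4*π*τ*‖x‖)⁻¹ * (Real.exp (-τ * (‖x‖ - x 0) / 2) - 1) := by
    unfold Ofun Npot
    ring
  exact ⟨hformula ▸ hasLineDerivAt_Phi τ hx, hformula⟩

theorem stmt16 (τ : ℝ) (hτ : 0 < τ) (x : E3) (hx : x ≠ 0) :
    HasLineDerivAt ℝ (Phi τ) (τ⁻¹ * (Ofun τ x - Npot x)) x e1 ∧
    τ⁻¹ * (Ofun τ x - Npot x)
      = (4*π*τ*‖x‖)⁻¹ * (Real.exp (-τ * (‖x‖ - x 0) / 2) - 1) :=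
  stmt16_general τ x hx

end
end
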